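/- For every n ≥ 3, the subgroup Q_{2^n} of the group of units of the real quaternions generated by the 2^(n−1)-th roots of unity (embedded via ℂ → ℍ) together with Q8 = {1, −1, i, −i, j, −j, k, −k} is isomorphic to the group with presentation ⟨x, y | x⁴ = 1, x² = y^(2^(n−2)), x y x⁻¹ = y⁻¹⟩, i.e. to Mathlib's QuaternionGroup (2^(n−2)); in particular it has order 2^n. -/

import Mathlib

open Quaternion Pointwise

/-- The quasicyclic 2-group `C_{2^∞}`: the subgroup of `ℂˣ` of all `z`
with `z ^ (2 ^ n) = 1` for some `n`. -/
def C2inf : Subgroup ℂˣ where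
  carrier := {z | ∃ n : ℕ, z ^ 2 ^ n = 1}
  one_mem' := ⟨0, one_pow _⟩
  mul_mem' := by
    rintro a b ⟨n, hn⟩ ⟨m, hm⟩
    exact ⟨n + m, by rw [mul_pow, pow_add, pow_mul, hn, one_pow, one_mul, pow_mul', hm, one_pow]⟩
  inv_mem' := by
    rintro a ⟨n, hn⟩
    exact ⟨n, by rw [inv_pow, hn, inv_one]⟩

/-- The canonical embedding of `ℂ` into the real quaternions `ℍ`. -/
noncomputable def complexToQuaternion : ℂ →ₐ[ℝ] ℍ[ℝ] :=
  Complex.lift ⟨⟨0, 1, 0, 0⟩, by ext <;> (repeat' first | erw [Quaternion.re_mul] | erw [Quaternion.imI_mul] | erw [Quaternion.imJ_mul] | erw [Quaternion.imK_mul] | erw [Quaternion.re_neg] | erw [Quaternion.imI_neg] | erw [Quaternion.imJ_neg] | erw [Quaternion.imK_neg]) <;> simp⟩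

/-- The quaternion `i` as a unit of `ℍ`. -/
noncomputable def quatI : ℍ[ℝ]ˣ := ⟨⟨0, 1, 0, 0⟩, -⟨0, 1, 0, 0⟩, by ext <;> (repeat' first | erw [Quaternion.re_mul] | erw [Quaternion.imI_mul] | erw [Quaternion.imJ_mul] | erw [Quaternion.imK_mul] | erw [Quaternion.re_neg] | erw [Quaternion.imI_neg] | erw [Quaternion.imJ_neg] | erw [Quaternion.imK_neg]) <;> simp, by ext <;> (repeat' first | erw [Quaternion.re_mul] | erw [Quaternion.imI_mul] | erw [Quaternion.imJ_mul] | erw [Quaternion.imK_mul] | erw [Quaternion.re_neg] | erw [Quaternion.imI_neg] | erw [Quaternion.imJ_neg] | erw [Quaternion.imK_neg]) <;> simp⟩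

/-- The quaternion `j` as a unit of `ℍ`. -/
noncomputable def quatJ : ℍ[ℝ]ˣ := ⟨⟨0, 0, 1, 0⟩, -⟨0, 0, 1, 0⟩, by ext <;> (repeat' first | erw [Quaternion.re_mul] | erw [Quaternion.imI_mul] | erw [Quaternion.imJ_mul] | erw [Quaternion.imK_mul] | erw [Quaternion.re_neg] | erw [Quaternion.imI_neg] | erw [Quaternion.imJ_neg] | erw [Quaternion.imK_neg]) <;> simp, by ext <;> (repeat' first | erw [Quaternion.re_mul] | erw [Quaternion.imI_mul] | erw [Quaternion.imJ_mul] | erw [Quaternion.imK_mul] | erw [Quaternion.re_neg] | erw [Quaternion.imI_neg] | erw [Quaternion.imJ_neg] | erw [Quaternion.imK_neg]) <;> simp⟩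

/-- The quaternion `k` as a unit of `ℍ`. -/
noncomputable def quatK : ℍ[ℝ]ˣ := ⟨⟨0, 0, 0, 1⟩, -⟨0, 0, 0, 1⟩, by ext <;> (repeat' first | erw [Quaternion.re_mul] | erw [Quaternion.imI_mul] | erw [Quaternion.imJ_mul] | erw [Quaternion.imK_mul] | erw [Quaternion.re_neg] | erw [Quaternion.imI_neg] | erw [Quaternion.imJ_neg] | erw [Quaternion.imK_neg]) <;> simp, by ext <;> (repeat' first | erw [Quaternion.re_mul] | erw [Quaternion.imI_mul] | erw [Quaternion.imJ_mul] | erw [Quaternion.imK_mul] | erw [Quaternion.re_neg] | erw [Quaternion.imI_neg] | erw [Quaternion.imJ_neg] | erw [Quaternion.imK_neg]) <;> simp⟩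

/-- The 8-element quaternion group `Q₈ = {1, -1, i, -i, j, -j, k, -k}` as a set of
units of `ℍ`. -/
noncomputable def Q8 : Set ℍ[ℝ]ˣ := {1, -1, quatI, -quatI, quatJ, -quatJ, quatK, -quatK}

/-- The infinite generalized quaternion group `Q_{2^∞}`: the subgroup of `ℍˣ` generated by
the image of `C_{2^∞}` under the embedding `ℂ → ℍ` together with `Q₈`. -/
noncomputable def Q2inf : Subgroup ℍ[ℝ]ˣ :=
  Subgroup.closure ((Units.map complexToQuaternion.toMonoidHom) '' (C2inf : Set ℂˣ) ∪ Q8)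

/-- The quasicyclic group `C_{2^∞}` viewed as a subgroup of `ℍˣ` via the embedding `ℂ → ℍ`. -/
noncomputable def C2infH : Subgroup ℍ[ℝ]ˣ :=
  Subgroup.map (Units.map complexToQuaternion.toMonoidHom) C2inf

/-- The finite generalized quaternion group `Q_{2^n}`: the subgroup of `ℍˣ` generated by
the complex `2 ^ (n - 1)`-th roots of unity (embedded via `ℂ → ℍ`) together with `Q₈`. -/
noncomputable def Qfin (n : ℕ) : Subgroup ℍ[ℝ]ˣ :=
  Subgroup.closure
    ((Units.map complexToQuaternion.toMonoidHom) '' {z : ℂˣ | z ^ 2 ^ (n - 1) = 1} ∪ Q8)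

/-!
Let `m = 2 ^ (n - 2)`, let `ζ` be a primitive `2m`-th root of unity in `ℂ` and let `j` be the
quaternion unit. In `ℍˣ` the element `ζ` has order `2m`, `j² = -1 = ζ ^ m`, and conjugation by `j`
acts on the image of `ℂ` as complex conjugation, so `j ζ j⁻¹ = ζ⁻¹`. Hence `a ↦ ζ, xa 0 ↦ j`
defines a homomorphism `QuaternionGroup m → ℍˣ`. It is injective because `ζ` has order exactly
`2m` and `j` does not lie in the image of `ℂ`. Its image is `⟨ζ, j⟩`, which is `Q_{2^n}`: the
`2^(n-1)`-th roots of unity are the powers of `ζ`, and `Q₈` is generated by `j` and `i`, which is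
itself a power of `ζ`.
-/

section PowVal

variable {G : Type*} [Group G] {n : ℕ} {a : G}

lemma pow_val_add [NeZero n] (ha : a ^ n = 1) (i j : ZMod n) :
    a ^ (i + j).val = a ^ i.val * a ^ j.val := by
  rw [ZMod.val_add, ← pow_eq_pow_mod _ ha, pow_add]

lemma pow_val_sub [NeZero n] (ha : a ^ n = 1) (i j : ZMod n) :
    a ^ (j - i).val = (a ^ i.val)⁻¹ * a ^ j.val := by
  rw [eq_inv_mul_iff_mul_eq, ← pow_val_add ha, add_sub_cancel]

lemma pow_val_natCast (ha : a ^ n = 1) (k : ℕ) : a ^ (k : ZMod n).val = a ^ k := by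
  rw [ZMod.val_natCast, ← pow_eq_pow_mod _ ha]

end PowVal

namespace QuaternionGroup

variable {G : Type*} [Group G] {m : ℕ} [NeZero m]

def lift (a x : G) (ha : a ^ (2 * m) = 1) (hx : x ^ 2 = a ^ m) (hxa : x * a * x⁻¹ = a⁻¹) :
    QuaternionGroup m →* G :=
  have hconj (k : ℕ) : a ^ k * x = x * (a ^ k)⁻¹ := by
    have h : SemiconjBy x a⁻¹ a := by
      simpa using SemiconjBy.inv_right (mul_inv_eq_iff_eq_mul.mp hxa : SemiconjBy x a a⁻¹)
    rw [← inv_pow, (h.pow_right k).eq]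
  MonoidHom.mk' (fun
      | .a i => a ^ i.val
      | .xa i => x * a ^ i.val)
    (by
      rintro (i | i) (j | j)
      · exact pow_val_add ha i j
      · show x * a ^ (j - i).val = a ^ i.val * (x * a ^ j.val)
        rw [pow_val_sub ha, ← mul_assoc (a ^ i.val), hconj, mul_assoc]
      · show x * a ^ (i + j).val = x * a ^ i.val * a ^ j.val
        rw [pow_val_add ha, mul_assoc]
      · show a ^ ((m : ZMod (2 * m)) + j - i).val = x * a ^ i.val * (x * a ^ j.val)
        rw [add_sub_assoc, pow_val_add ha, pow_val_sub ha, pow_val_natCast ha, ← hx,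
          mul_assoc x, ← mul_assoc _ x, hconj, sq]
        group)

variable {a x : G} {ha : a ^ (2 * m) = 1} {hx : x ^ 2 = a ^ m} {hxa : x * a * x⁻¹ = a⁻¹}

@[simp] lemma lift_a (i : ZMod (2 * m)) : lift a x ha hx hxa (.a i) = a ^ i.val := rfl

@[simp] lemma lift_xa (i : ZMod (2 * m)) : lift a x ha hx hxa (.xa i) = x * a ^ i.val := rfl

lemma lift_injective (hord : orderOf a = 2 * m) (hx_zpowers : x ∉ Subgroup.zpowers a) :
    Function.Injective (lift a x ha hx hxa) := by
  rw [injective_iff_map_eq_one]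
  rintro (i | i) h
  · rw [lift_a, ← orderOf_dvd_iff_pow_eq_one, hord] at h
    rw [← ZMod.natCast_zmod_val i, (ZMod.natCast_eq_zero_iff _ _).mpr h]
    rfl
  · rw [lift_xa, mul_eq_one_iff_eq_inv] at h
    exact absurd (h ▸ inv_mem (Subgroup.npow_mem_zpowers a i.val)) hx_zpowers

lemma range_lift : (lift a x ha hx hxa).range = Subgroup.closure {a, x} := by
  apply le_antisymm
  · rintro _ ⟨i | i, rfl⟩
    · exact pow_mem (Subgroup.subset_closure (.inl rfl)) _
    · exact mul_mem (Subgroup.subset_closure (.inr rfl))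
        (pow_mem (Subgroup.subset_closure (.inl rfl)) _)
  · rw [Subgroup.closure_le, Set.insert_subset_iff, Set.singleton_subset_iff]
    refine ⟨⟨.a 1, ?_⟩, ⟨.xa 0, ?_⟩⟩
    · rw [lift_a, ZMod.val_one'' (by have := NeZero.ne m; omega), pow_one]
    · rw [lift_xa, ZMod.val_zero, pow_zero, mul_one]

end QuaternionGroup

local notation "ι" => Units.map complexToQuaternion.toMonoidHom

lemma complexToQuaternion_apply (z : ℂ) : complexToQuaternion z = ⟨z.re, z.im, 0, 0⟩ := by
  have hi : (⟨0, 1, 0, 0⟩ : ℍ[ℝ]) * ⟨0, 1, 0, 0⟩ = -1 := by ext <;> simp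
  change Complex.liftAux _ hi z = _
  ext <;> simp [Complex.liftAux_apply]

lemma val_quatI : (quatI : ℍ[ℝ]) = ⟨0, 1, 0, 0⟩ := rfl

lemma val_quatJ : (quatJ : ℍ[ℝ]) = ⟨0, 0, 1, 0⟩ := rfl

lemma val_quatK : (quatK : ℍ[ℝ]) = ⟨0, 0, 0, 1⟩ := rfl

/- The components of a product are expanded before `quatI`, `quatJ`, `quatK` are unfolded: the
literals in their definitions carry instance arguments that `Quaternion.re_mul` and its siblings
do not match syntactically. -/
lemma quatJ_mul_quatJ : quatJ * quatJ = -1 := by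
  ext <;> simp only [Units.val_mul, Quaternion.re_mul, Quaternion.imI_mul, Quaternion.imJ_mul,
    Quaternion.imK_mul] <;> simp [val_quatJ]

lemma quatI_mul_quatJ : quatI * quatJ = quatK := by
  ext <;> simp only [Units.val_mul, Quaternion.re_mul, Quaternion.imI_mul, Quaternion.imJ_mul,
    Quaternion.imK_mul] <;> simp [val_quatI, val_quatJ, val_quatK]

lemma complexToQuaternion_mul_quatJ (z : ℂ) :
    complexToQuaternion z * quatJ = quatJ * complexToQuaternion (starRingEnd ℂ z) := by
  ext <;> simp only [Quaternion.re_mul, Quaternion.imI_mul, Quaternion.imJ_mul,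
    Quaternion.imK_mul] <;> simp [val_quatJ, complexToQuaternion_apply]

lemma complexToQuaternion_I : complexToQuaternion Complex.I = quatI := by
  ext <;> simp [complexToQuaternion_apply, val_quatI]

lemma quatJ_notMem_range : quatJ ∉ (ι).range := by
  rintro ⟨z, hz⟩
  have := congrArg (fun u : ℍ[ℝ]ˣ => (u : ℍ[ℝ]).imJ) hz
  simp [complexToQuaternion_apply, val_quatJ] at this

lemma Q8_subset_of_mem {H : Subgroup ℍ[ℝ]ˣ} (hI : quatI ∈ H) (hJ : quatJ ∈ H) : Q8 ⊆ H := by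
  have hneg_one : -1 ∈ H := quatJ_mul_quatJ ▸ mul_mem hJ hJ
  have hK : quatK ∈ H := quatI_mul_quatJ ▸ mul_mem hI hJ
  have hneg {u : ℍ[ℝ]ˣ} (hu : u ∈ H) : -u ∈ H := neg_one_mul u ▸ mul_mem hneg_one hu
  simp only [Q8, Set.insert_subset_iff, Set.singleton_subset_iff, SetLike.mem_coe]
  exact ⟨one_mem H, hneg_one, hI, hneg hI, hJ, hneg hJ, hK, hneg hK⟩

lemma IsPrimitiveRoot.pow_eq_neg_one {R : Type*} [CommRing R] [IsDomain R] {ζ : Rˣ} {m : ℕ}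
    [NeZero m] (hζ : IsPrimitiveRoot ζ (2 * m)) : ζ ^ m = -1 := by
  have := (IsPrimitiveRoot.coe_units_iff.mpr hζ).pow_of_dvd (NeZero.ne m) (dvd_mul_left m 2)
  rw [Nat.mul_div_cancel _ (Nat.pos_of_neZero m)] at this
  exact Units.ext (by simpa using this.eq_neg_one_of_two_right)

section RootOfUnity

variable {k : ℕ} [NeZero k] {ζ : ℂˣ}

lemma image_rootsOfUnity_eq_zpowers (hζ : IsPrimitiveRoot ζ k) :
    ι '' {z : ℂˣ | z ^ k = 1} = Subgroup.zpowers (ι ζ) := by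
  rw [← MonoidHom.map_zpowers, hζ.zpowers_eq]
  rfl

lemma quatJ_mul_mul_inv (hζ : IsPrimitiveRoot ζ k) : quatJ * ι ζ * quatJ⁻¹ = (ι ζ)⁻¹ := by
  have hnorm : ‖(ζ : ℂ)‖ = 1 :=
    Complex.norm_eq_one_of_pow_eq_one (by simpa using congrArg Units.val hζ.pow_eq_one)
      (NeZero.ne k)
  have hinv : ((ζ⁻¹ : ℂˣ) : ℂ) = starRingEnd ℂ ζ := by
    rw [Units.val_inv_eq_inv_val, Complex.inv_eq_conj hnorm]
  rw [mul_inv_eq_iff_eq_mul, ← map_inv]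
  ext1
  change (quatJ : ℍ[ℝ]) * complexToQuaternion ζ = complexToQuaternion ((ζ⁻¹ : ℂˣ) : ℂ) * quatJ
  rw [hinv, complexToQuaternion_mul_quatJ, Complex.conj_conj]

end RootOfUnity

lemma Qfin_eq_closure {n : ℕ} (hn : 3 ≤ n) {ζ : ℂˣ} (hζ : IsPrimitiveRoot ζ (2 ^ (n - 1))) :
    Qfin n = Subgroup.closure {ι ζ, quatJ} := by
  have hI : quatI ∈ Subgroup.zpowers (ι ζ) := by
    rw [← SetLike.mem_coe, ← image_rootsOfUnity_eq_zpowers hζ]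
    refine ⟨Units.mk0 Complex.I Complex.I_ne_zero, Units.ext ?_, Units.ext complexToQuaternion_I⟩
    obtain ⟨k, hk⟩ : 2 ^ 2 ∣ 2 ^ (n - 1) := pow_dvd_pow 2 (by omega)
    simp [hk, pow_mul]
  rw [Qfin, image_rootsOfUnity_eq_zpowers hζ]
  apply le_antisymm
  · rw [Subgroup.closure_le]
    refine Set.union_subset (Subgroup.zpowers_le.mpr (Subgroup.subset_closure (.inl rfl))) ?_
    exact Q8_subset_of_mem (Subgroup.zpowers_le.mpr (Subgroup.subset_closure (.inl rfl)) hI)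
      (Subgroup.subset_closure (.inr rfl))
  · rw [Subgroup.closure_le, Set.insert_subset_iff, Set.singleton_subset_iff]
    exact ⟨Subgroup.subset_closure (.inl (Subgroup.mem_zpowers _)),
      Subgroup.subset_closure (.inr (by simp [Q8]))⟩

/-- For `n ≥ 3`, the subgroup `Q_{2^n}` of `ℍˣ` is isomorphic to the generalized
quaternion group `QuaternionGroup (2 ^ (n - 2))` (the group with presentation
`⟨x, y | x⁴ = 1, x² = y^(2^(n-2)), x y x⁻¹ = y⁻¹⟩`); in particular it has order `2 ^ n`. -/
theorem stmt_16 (n : ℕ) (hn : 3 ≤ n) :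
    Nonempty (Qfin n ≃* QuaternionGroup (2 ^ (n - 2))) ∧ Nat.card (Qfin n) = 2 ^ n := by
  set m := 2 ^ (n - 2)
  have h2m : 2 * m = 2 ^ (n - 1) := by rw [← pow_succ']; congr 1; omega
  obtain ⟨ζ, hζ⟩ : ∃ ζ : ℂˣ, IsPrimitiveRoot ζ (2 * m) :=
    ⟨_, (Complex.isPrimitiveRoot_exp _ (NeZero.ne _)).isUnit_unit (NeZero.ne _)⟩
  have hord : orderOf (ι ζ) = 2 * m := by
    rw [orderOf_injective _ (Units.map_injective complexToQuaternion.injective), hζ.eq_orderOf]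
  have hJ_sq : quatJ ^ 2 = ι ζ ^ m := by
    rw [sq, quatJ_mul_quatJ, ← map_pow, hζ.pow_eq_neg_one]
    exact Units.ext (by simp)
  let φ := QuaternionGroup.lift (ι ζ) quatJ (hord ▸ pow_orderOf_eq_one _) hJ_sq
    (quatJ_mul_mul_inv hζ)
  have hφ : Function.Injective φ := QuaternionGroup.lift_injective hord
    fun h ↦ quatJ_notMem_range (Subgroup.zpowers_le.mpr (MonoidHom.mem_range.mpr ⟨ζ, rfl⟩) h)
  have e : QuaternionGroup m ≃* Qfin n := (MonoidHom.ofInjective hφ).trans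
    (MulEquiv.subgroupCongr (by rw [QuaternionGroup.range_lift, Qfin_eq_closure hn (h2m ▸ hζ)]))
  refine ⟨⟨e.symm⟩, ?_⟩
  rw [← Nat.card_congr e.toEquiv, Nat.card_eq_fintype_card, QuaternionGroup.card,
    show 4 = 2 ^ 2 from rfl, ← pow_add]
  congr 1
  omega
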